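/- arXiv:1911.10643 — 4 statements merged into one kernel-verified Lean document; each statement's English description precedes it below -/
import Mathlib

section
/- Let p be a prime and suppose we are given a commutative diagram of finitely generated ℤ_p-modules with exact rows 0 → A' → A → A'' → 0 and 0 → B' → B → B'' → 0, and vertical homomorphisms π' : A' → B', π : A → B, π'' : A'' → B'' commuting with the horizontal maps. If any two of π', π, π'' have finite kernel and finite cokernel, then so does the third, and ∇(π) = ∇(π') + ∇(π''). -/
/-!
The snake lemma turns the diagram into an exact sequence
`0 → ker π' → ker π → ker π'' → coker π' → coker π → coker π'' → 0`.
If two of the vertical maps have finite kernel and cokernel, every term of this sequence sits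
between two finite ones, hence is finite; additivity of length along the sequence then gives
the identity for the length terms of `∇`. The `ℚ_p`-dimension terms are additive because `ℚ_p`
is flat over `ℤ_p`, so `0 → B' → B → B'' → 0` stays exact after tensoring.
-/

open TensorProduct

/-- The length of a module over a ring `R`: the supremum of the lengths of strictly
increasing chains of submodules. -/
noncomputable def moduleLength (R M : Type*) [Ring R] [AddCommGroup M] [Module R M] : ℕ∞ :=
  WithBot.unbotD 0 (Order.krullDim (Submodule R M))

/-- `π` has finite kernel and finite cokernel. -/
def HasFiniteKerCoker {p : ℕ} [Fact p.Prime] {M N : Type*} [AddCommGroup M] [Module ℤ_[p] M]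
    [AddCommGroup N] [Module ℤ_[p] N] (π : M →ₗ[ℤ_[p]] N) : Prop :=
  Finite (LinearMap.ker π) ∧ Finite (N ⧸ LinearMap.range π)

/-- The Kobayashi rank
`∇(π) = length_{ℤ_p}(ker π) − length_{ℤ_p}(coker π) + dim_{ℚ_p}(N ⊗_{ℤ_p} ℚ_p)`. -/
noncomputable def kobayashiRank {p : ℕ} [Fact p.Prime] {M N : Type*} [AddCommGroup M]
    [Module ℤ_[p] M] [AddCommGroup N] [Module ℤ_[p] N] (π : M →ₗ[ℤ_[p]] N) : ℤ :=
  ((moduleLength ℤ_[p] (LinearMap.ker π)).toNat : ℤ)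
    - ((moduleLength ℤ_[p] (N ⧸ LinearMap.range π)).toNat : ℤ)
    + (Module.finrank ℚ_[p] (ℚ_[p] ⊗[ℤ_[p]] N) : ℤ)

open Function LinearMap

section ExactSequence

variable {R : Type*} [Ring R] {M₁ M₂ M₃ M₄ M₅ M₆ : Type*}
  [AddCommGroup M₁] [Module R M₁] [AddCommGroup M₂] [Module R M₂]
  [AddCommGroup M₃] [Module R M₃] [AddCommGroup M₄] [Module R M₄]
  [AddCommGroup M₅] [Module R M₅] [AddCommGroup M₆] [Module R M₆]

theorem moduleLength_eq_length : moduleLength R M₁ = Module.length R M₁ := by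
  rw [moduleLength, ← Module.coe_length, WithBot.unbotD_coe]

theorem Module.length_ne_top_of_finite [Finite M₁] : Module.length R M₁ ≠ ⊤ :=
  have := isArtinian_of_finite (R := R) (M := M₁)
  Module.length_ne_top

theorem Function.Exact.finite {f : M₁ →ₗ[R] M₂} {g : M₂ →ₗ[R] M₃} (hfg : Exact f g)
    [Finite M₁] [Finite M₃] : Finite M₂ := by
  have : Finite (range f) := Set.finite_range f
  have : Finite (M₂ ⧸ (range f).toAddSubgroup) := by
    change Finite (M₂ ⧸ range f)
    rw [← hfg.linearMap_ker_eq]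
    exact .of_equiv _ g.quotKerEquivRange.toEquiv.symm
  exact .of_addSubgroup_quotient (H := (range f).toAddSubgroup)

theorem Module.length_eq_length_range_add_length_range {f : M₁ →ₗ[R] M₂} {g : M₂ →ₗ[R] M₃}
    (hfg : Exact f g) :
    Module.length R M₂ = Module.length R (range f) + Module.length R (range g) :=
  Module.length_eq_add_of_exact _ _ (Submodule.injective_subtype _) g.surjective_rangeRestrict
    hfg.linearMap_rangeRestrict

theorem Module.length_add_length_add_length_eq_of_exact_six {f₁ : M₁ →ₗ[R] M₂}
    {f₂ : M₂ →ₗ[R] M₃} {f₃ : M₃ →ₗ[R] M₄} {f₄ : M₄ →ₗ[R] M₅} {f₅ : M₅ →ₗ[R] M₆}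
    (hf₁ : Function.Injective f₁) (h₁₂ : Exact f₁ f₂) (h₂₃ : Exact f₂ f₃) (h₃₄ : Exact f₃ f₄)
    (h₄₅ : Exact f₄ f₅) (hf₅ : Function.Surjective f₅) :
    Module.length R M₁ + Module.length R M₃ + Module.length R M₅ =
      Module.length R M₂ + Module.length R M₄ + Module.length R M₆ := by
  have hM₁ : Module.length R (range f₁) = Module.length R M₁ :=
    (LinearEquiv.ofInjective f₁ hf₁).length_eq.symm
  have hM₆ : Module.length R (range f₅) = Module.length R M₆ := by
    rw [range_eq_top.mpr hf₅]
    exact Submodule.topEquiv.length_eq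
  rw [Module.length_eq_length_range_add_length_range h₁₂,
    Module.length_eq_length_range_add_length_range h₂₃,
    Module.length_eq_length_range_add_length_range h₃₄,
    Module.length_eq_length_range_add_length_range h₄₅, hM₁, ← hM₆]
  ac_rfl

end ExactSequence

theorem Module.finrank_eq_add_of_exact {K V₁ V₂ V₃ : Type*} [Field K]
    [AddCommGroup V₁] [Module K V₁] [AddCommGroup V₂] [Module K V₂] [FiniteDimensional K V₂]
    [AddCommGroup V₃] [Module K V₃] {f : V₁ →ₗ[K] V₂} {g : V₂ →ₗ[K] V₃}
    (hf : Function.Injective f) (hg : Function.Surjective g) (hfg : Exact f g) :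
    finrank K V₂ = finrank K V₁ + finrank K V₃ := by
  rw [← g.finrank_range_add_finrank_ker, hfg.linearMap_ker_eq, range_eq_top.mpr hg, finrank_top,
    finrank_range_of_inj hf, add_comm]

theorem Module.finrank_baseChange_eq_add_of_exact {R K M₁ M₂ M₃ : Type*} [CommRing R]
    [Field K] [Algebra R K] [Module.Flat R K] [AddCommGroup M₁] [Module R M₁]
    [AddCommGroup M₂] [Module R M₂] [Module.Finite R M₂] [AddCommGroup M₃] [Module R M₃]
    {f : M₁ →ₗ[R] M₂} {g : M₂ →ₗ[R] M₃} (hf : Function.Injective f)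
    (hg : Function.Surjective g) (hfg : Exact f g) :
    finrank K (K ⊗[R] M₂) = finrank K (K ⊗[R] M₁) + finrank K (K ⊗[R] M₃) :=
  finrank_eq_add_of_exact (f := f.baseChange K) (g := g.baseChange K)
    (Module.Flat.lTensor_preserves_injective_linearMap f hf) (g.lTensor_surjective K hg)
    (Module.Flat.lTensor_exact K hfg)

section CommSquare

variable {R : Type*} [CommRing R] {M M' N N' : Type*} [AddCommGroup M] [Module R M]
  [AddCommGroup M'] [Module R M'] [AddCommGroup N] [Module R N] [AddCommGroup N'] [Module R N']
  {f : M →ₗ[R] M'} {g : N →ₗ[R] N'} {u : M →ₗ[R] N} {v : M' →ₗ[R] N'}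

def kerMapOfComm (h : v ∘ₗ f = g ∘ₗ u) : ker u →ₗ[R] ker v :=
  f.restrict fun x hx ↦ by
    rw [mem_ker] at hx ⊢
    rw [← LinearMap.comp_apply, h, LinearMap.comp_apply, hx, map_zero]

def cokerMapOfComm (h : v ∘ₗ f = g ∘ₗ u) : (N ⧸ range u) →ₗ[R] (N' ⧸ range v) :=
  Submodule.mapQ _ _ g <| by
    rintro _ ⟨x, rfl⟩
    exact ⟨f x, LinearMap.congr_fun h x⟩

theorem injective_kerMapOfComm (h : v ∘ₗ f = g ∘ₗ u) (hf : Function.Injective f) :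
    Function.Injective (kerMapOfComm h) :=
  fun _ _ hxy ↦ Subtype.ext (hf (congrArg Subtype.val hxy))

theorem surjective_cokerMapOfComm (h : v ∘ₗ f = g ∘ₗ u) (hg : Function.Surjective g) :
    Function.Surjective (cokerMapOfComm h) := by
  intro y
  obtain ⟨n, rfl⟩ := Submodule.mkQ_surjective _ y
  obtain ⟨m, rfl⟩ := hg n
  exact ⟨Submodule.Quotient.mk m, rfl⟩

end CommSquare

section CommDiagram

variable {R : Type*} [CommRing R] {A' A A'' B' B B'' : Type*}
  [AddCommGroup A'] [Module R A'] [AddCommGroup A] [Module R A]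
  [AddCommGroup A''] [Module R A''] [AddCommGroup B'] [Module R B']
  [AddCommGroup B] [Module R B] [AddCommGroup B''] [Module R B'']
  {iA : A' →ₗ[R] A} {pA : A →ₗ[R] A''} {iB : B' →ₗ[R] B} {pB : B →ₗ[R] B''}
  {π' : A' →ₗ[R] B'} {π : A →ₗ[R] B} {π'' : A'' →ₗ[R] B''}
  (h₁ : π ∘ₗ iA = iB ∘ₗ π') (h₂ : π'' ∘ₗ pA = pB ∘ₗ π)

include h₁ h₂

theorem exact_kerMapOfComm (hA : Exact iA pA) (hiB : Function.Injective iB) :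
    Exact (kerMapOfComm h₁) (kerMapOfComm h₂) := by
  rintro ⟨a, ha⟩
  constructor
  · intro hpa
    obtain ⟨a', rfl⟩ := (hA a).1 (congrArg Subtype.val hpa)
    refine ⟨⟨a', hiB ?_⟩, rfl⟩
    rw [map_zero, ← LinearMap.comp_apply, ← h₁, LinearMap.comp_apply]
    exact ha
  · rintro ⟨x, hx⟩
    rw [← hx]
    exact Subtype.ext (hA.apply_apply_eq_zero x.1)

theorem exact_cokerMapOfComm (hB : Exact iB pB) (hpA : Function.Surjective pA) :
    Exact (cokerMapOfComm h₁) (cokerMapOfComm h₂) := by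
  refine (hB.exact_mapQ_iff _ _).mpr ?_
  rintro _ ⟨-, a'', rfl⟩
  obtain ⟨a, rfl⟩ := hpA a''
  exact ⟨π a, ⟨a, rfl⟩, (LinearMap.congr_fun h₂ a).symm⟩

theorem exists_connectingMap_exact (hA : Exact iA pA) (hB : Exact iB pB)
    (hpA : Function.Surjective pA) (hiB : Function.Injective iB) :
    ∃ δ : ker π'' →ₗ[R] B' ⧸ range π',
      Exact (kerMapOfComm h₂) δ ∧ Exact δ (cokerMapOfComm h₁) :=
  ⟨SnakeLemma.δ' π' π π'' iA pA hA iB pB hB h₁.symm h₂.symm (ker π'').subtype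
      (exact_subtype_ker_map π'') (range π').mkQ (exact_map_mkQ_range π') hpA hiB,
    SnakeLemma.exact_δ'_right _ _ _ _ _ _ _ _ _ _ _ (ker π).subtype (exact_subtype_ker_map π)
      _ _ _ _ hpA hiB _ rfl Subtype.val_injective,
    SnakeLemma.exact_δ'_left _ _ _ _ _ _ _ _ _ _ _ _ _ _ _ (range π).mkQ
      (exact_map_mkQ_range π) hpA hiB _ rfl (Submodule.mkQ_surjective _)⟩

end CommDiagram

theorem kobayashiRank_additive_of_comm_diagram_general {p : ℕ} [Fact p.Prime]
    {A' A A'' B' B B'' : Type*}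
    [AddCommGroup A'] [Module ℤ_[p] A']
    [AddCommGroup A] [Module ℤ_[p] A]
    [AddCommGroup A''] [Module ℤ_[p] A'']
    [AddCommGroup B'] [Module ℤ_[p] B']
    [AddCommGroup B] [Module ℤ_[p] B] [Module.Finite ℤ_[p] B]
    [AddCommGroup B''] [Module ℤ_[p] B'']
    (iA : A' →ₗ[ℤ_[p]] A) (pA : A →ₗ[ℤ_[p]] A'')
    (iB : B' →ₗ[ℤ_[p]] B) (pB : B →ₗ[ℤ_[p]] B'')
    (hiA : Function.Injective iA) (hpA : Function.Surjective pA)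
    (hA : Function.Exact iA pA)
    (hiB : Function.Injective iB) (hpB : Function.Surjective pB)
    (hB : Function.Exact iB pB)
    (π' : A' →ₗ[ℤ_[p]] B') (π : A →ₗ[ℤ_[p]] B) (π'' : A'' →ₗ[ℤ_[p]] B'')
    (hcomm₁ : π ∘ₗ iA = iB ∘ₗ π') (hcomm₂ : π'' ∘ₗ pA = pB ∘ₗ π)
    (htwo : (HasFiniteKerCoker π' ∧ HasFiniteKerCoker π) ∨
      (HasFiniteKerCoker π' ∧ HasFiniteKerCoker π'') ∨
      (HasFiniteKerCoker π ∧ HasFiniteKerCoker π'')) :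
    HasFiniteKerCoker π' ∧ HasFiniteKerCoker π ∧ HasFiniteKerCoker π'' ∧
      kobayashiRank π = kobayashiRank π' + kobayashiRank π'' := by
  obtain ⟨δ, hδ_left, hδ_right⟩ := exists_connectingMap_exact hcomm₁ hcomm₂ hA hB hpA hiB
  have hK_inj := injective_kerMapOfComm hcomm₁ hiA
  have hK_exact := exact_kerMapOfComm hcomm₁ hcomm₂ hA hiB
  have hC_exact := exact_cokerMapOfComm hcomm₁ hcomm₂ hB hpA
  have hC_surj := surjective_cokerMapOfComm hcomm₂ hpB
  have hfin : HasFiniteKerCoker π' ∧ HasFiniteKerCoker π ∧ HasFiniteKerCoker π'' := by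
    rcases htwo with ⟨⟨_, _⟩, _, _⟩ | ⟨⟨_, _⟩, _, _⟩ | ⟨⟨_, _⟩, _, _⟩
    · exact ⟨⟨‹_›, ‹_›⟩, ⟨‹_›, ‹_›⟩, hδ_left.finite, .of_surjective _ hC_surj⟩
    · exact ⟨⟨‹_›, ‹_›⟩, ⟨hK_exact.finite, hC_exact.finite⟩, ‹_›, ‹_›⟩
    · exact ⟨⟨.of_injective _ hK_inj, hδ_right.finite⟩, ⟨‹_›, ‹_›⟩, ‹_›, ‹_›⟩
  obtain ⟨⟨_, _⟩, ⟨_, _⟩, ⟨_, _⟩⟩ := hfin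
  refine ⟨⟨‹_›, ‹_›⟩, ⟨‹_›, ‹_›⟩, ⟨‹_›, ‹_›⟩, ?_⟩
  have hlen := congrArg ENat.toNat <| Module.length_add_length_add_length_eq_of_exact_six
    hK_inj hK_exact hδ_left hδ_right hC_exact hC_surj
  simp only [ENat.toNat_add, ne_eq, ENat.add_eq_top, Module.length_ne_top_of_finite,
    not_false_eq_true, or_self] at hlen
  have hrank := Module.finrank_baseChange_eq_add_of_exact (K := ℚ_[p]) hiB hpB hB
  simp only [kobayashiRank, moduleLength_eq_length]
  omega

theorem kobayashiRank_additive_of_comm_diagram {p : ℕ} [Fact p.Prime]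
    {A' A A'' B' B B'' : Type*}
    [AddCommGroup A'] [Module ℤ_[p] A'] [Module.Finite ℤ_[p] A']
    [AddCommGroup A] [Module ℤ_[p] A] [Module.Finite ℤ_[p] A]
    [AddCommGroup A''] [Module ℤ_[p] A''] [Module.Finite ℤ_[p] A'']
    [AddCommGroup B'] [Module ℤ_[p] B'] [Module.Finite ℤ_[p] B']
    [AddCommGroup B] [Module ℤ_[p] B] [Module.Finite ℤ_[p] B]
    [AddCommGroup B''] [Module ℤ_[p] B''] [Module.Finite ℤ_[p] B'']
    (iA : A' →ₗ[ℤ_[p]] A) (pA : A →ₗ[ℤ_[p]] A'')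
    (iB : B' →ₗ[ℤ_[p]] B) (pB : B →ₗ[ℤ_[p]] B'')
    (hiA : Function.Injective iA) (hpA : Function.Surjective pA)
    (hA : Function.Exact iA pA)
    (hiB : Function.Injective iB) (hpB : Function.Surjective pB)
    (hB : Function.Exact iB pB)
    (π' : A' →ₗ[ℤ_[p]] B') (π : A →ₗ[ℤ_[p]] B) (π'' : A'' →ₗ[ℤ_[p]] B'')
    (hcomm₁ : π ∘ₗ iA = iB ∘ₗ π') (hcomm₂ : π'' ∘ₗ pA = pB ∘ₗ π)
    (htwo : (HasFiniteKerCoker π' ∧ HasFiniteKerCoker π) ∨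
      (HasFiniteKerCoker π' ∧ HasFiniteKerCoker π'') ∨
      (HasFiniteKerCoker π ∧ HasFiniteKerCoker π'')) :
    HasFiniteKerCoker π' ∧ HasFiniteKerCoker π ∧ HasFiniteKerCoker π'' ∧
      kobayashiRank π = kobayashiRank π' + kobayashiRank π'' :=
  kobayashiRank_additive_of_comm_diagram_general iA pA iB pB hiA hpA hA hiB hpB hB π' π π'' hcomm₁
    hcomm₂ htwo
end

section
/- Let p be an odd prime and f ∈ ℤ_p[[X]] a nonzero power series. Write f = p^μ·g where g ∈ ℤ_p[[X]] is not divisible by p, and let λ be the X-adic order of the reduction of g modulo p in 𝔽_p[[X]] (equivalently, by Weierstrass preparation, g = U·P with U a unit of ℤ_p[[X]] and P a distinguished polynomial of degree λ). Then there exists N such that for all n ≥ N, f(ε_n) ≠ 0 and ord_{ε_n}(f(ε_n)) = (p−1)p^{n−1}·μ + λ. -/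
/-!
Extend `v` by `v 0 = ⊤` to an additive valuation `w`, and put `t = (p - 1) p^(n-1)` and
`ε = ζ_{p^n} - 1`. The conjugates `1 - η` of `ε` over the primitive `p^n`-th roots `η` all have the
valuation of `ε` and multiply to `Φ_{p^n}(1) = p`, so `w ε = 1 / t`. The ring map `φ_n` kills
`(1 + X)^{p^n} - 1`, so Weierstrass division by it turns `φ_n h` into the value at `ε` of a
polynomial over `ℤ_p`; hence `w (φ_n h) ≥ 0` for every `h`, and `w (φ_n U) = 0` for every unit `U`.
Finally `g = X^λ U + p G` with `U` a unit, and once `λ < t` the term `ε^λ φ_n(U)` strictly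
dominates, so `w (φ_n g) = λ / t`.
-/

open PowerSeries

open Classical in
noncomputable def addValuationOfNeZero {K : Type*} [Field K] (v : K → ℚ)
    (hv_mul : ∀ x y : K, x ≠ 0 → y ≠ 0 → v (x * y) = v x + v y)
    (hv_add : ∀ x y : K, x ≠ 0 → y ≠ 0 → x + y ≠ 0 → min (v x) (v y) ≤ v (x + y)) :
    AddValuation K (WithTop ℚ) :=
  AddValuation.of (fun x => if x = 0 then ⊤ else (v x : WithTop ℚ)) (if_pos rfl)
    (by
      have h := hv_mul 1 1 one_ne_zero one_ne_zero
      rw [mul_one] at h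
      simp only [one_ne_zero, if_false, WithTop.coe_eq_zero]
      linarith)
    (by
      intro x y
      by_cases hx : x = 0
      · simp [hx]
      by_cases hy : y = 0
      · simp [hy]
      by_cases hxy : x + y = 0
      · simp [hxy]
      simp only [hx, hy, hxy, if_false, ← WithTop.coe_min, WithTop.coe_le_coe]
      exact hv_add x y hx hy hxy)
    (by
      intro x y
      by_cases hx : x = 0
      · simp [hx]
      by_cases hy : y = 0
      · simp [hy]
      simp only [hx, hy, mul_ne_zero hx hy, if_false, ← WithTop.coe_add, hv_mul x y hx hy])

theorem addValuationOfNeZero_eq_coe_iff {K : Type*} [Field K] (v : K → ℚ)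
    (hv_mul : ∀ x y : K, x ≠ 0 → y ≠ 0 → v (x * y) = v x + v y)
    (hv_add : ∀ x y : K, x ≠ 0 → y ≠ 0 → x + y ≠ 0 → min (v x) (v y) ≤ v (x + y))
    {x : K} {q : ℚ} : addValuationOfNeZero v hv_mul hv_add x = q ↔ x ≠ 0 ∧ v x = q := by
  by_cases hx : x = 0 <;> simp [addValuationOfNeZero, AddValuation.of_apply, hx]

namespace AddValuation
variable {R Γ₀ : Type*} [CommRing R] [LinearOrderedAddCommMonoidWithTop Γ₀]
  (w : AddValuation R Γ₀)

theorem map_prod {ι : Type*} (s : Finset ι) (f : ι → R) :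
    w (∏ i ∈ s, f i) = ∑ i ∈ s, w (f i) := by
  classical
  induction s using Finset.induction_on with
  | empty => simp
  | insert a s ha ih => rw [Finset.prod_insert ha, Finset.sum_insert ha, map_mul, ih]

theorem map_nonneg_of_pow_eq_one {ζ : R} {m : ℕ} (hm : m ≠ 0) (hζ : ζ ^ m = 1) : 0 ≤ w ζ := by
  by_contra! h
  have := nsmul_neg h hm
  rw [← map_pow, hζ, map_one] at this
  exact lt_irrefl _ this

theorem map_sub_one_le_map_pow_sub_one {ζ : R} (hζ : 0 ≤ w ζ) (k : ℕ) :
    w (ζ - 1) ≤ w (ζ ^ k - 1) := by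
  rw [← mul_geom_sum, map_mul]
  refine le_add_of_nonneg_right (map_le_sum w fun i _ => ?_)
  rw [map_pow]
  exact nsmul_nonneg hζ i

theorem map_eq_zero_of_isUnit {S : Type*} [CommRing S] (φ : S →+* R)
    (hφ : ∀ h, 0 ≤ w (φ h)) {u : S} (hu : IsUnit u) : w (φ u) = 0 := by
  obtain ⟨u, rfl⟩ := hu
  have h : w (φ u) + w (φ ↑u⁻¹) = 0 := by
    rw [← w.map_mul, ← _root_.map_mul, u.mul_inv, _root_.map_one, w.map_one]
  exact le_antisymm (h ▸ le_add_of_nonneg_right (hφ _)) (hφ _)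

theorem nonneg_map_coe_polynomial {A : Type*} [CommRing A] (φ : A⟦X⟧ →+* R)
    (hC : ∀ a, 0 ≤ w (φ (C a))) (hX : 0 ≤ w (φ X)) (r : Polynomial A) : 0 ≤ w (φ r) := by
  induction r using Polynomial.induction_on' with
  | add r s hr hs => rw [Polynomial.coe_add, _root_.map_add]; exact w.map_le_add hr hs
  | monomial n a =>
    rw [Polynomial.coe_monomial, monomial_eq_C_mul_X_pow, _root_.map_mul, _root_.map_pow,
      w.map_mul, w.map_pow]
    exact add_nonneg (hC a) (nsmul_nonneg hX n)

theorem nonneg_map_of_map_eq_zero {A : Type*} [CommRing A] [IsLocalRing A]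
    [IsAdicComplete (IsLocalRing.maximalIdeal A) A] (φ : A⟦X⟧ →+* R)
    (hC : ∀ a, 0 ≤ w (φ (C a))) (hX : 0 ≤ w (φ X)) {Q : A⟦X⟧}
    (hQ : Q.map (IsLocalRing.residue A) ≠ 0) (hφQ : φ Q = 0) (h : A⟦X⟧) : 0 ≤ w (φ h) := by
  rw [eq_mul_weierstrassDiv_add_weierstrassMod h hQ, _root_.map_add, _root_.map_mul, hφQ,
    zero_mul, zero_add]
  exact w.nonneg_map_coe_polynomial φ hC hX _

variable [IsDomain R]

theorem map_sub_one_eq_of_isPrimitiveRoot {ζ η : R} {m : ℕ} [NeZero m]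
    (hζ : IsPrimitiveRoot ζ m) (hη : IsPrimitiveRoot η m) : w (η - 1) = w (ζ - 1) := by
  obtain ⟨i, -, rfl⟩ := hζ.eq_pow_of_pow_eq_one hη.pow_eq_one
  obtain ⟨j, -, hj⟩ := hη.eq_pow_of_pow_eq_one hζ.pow_eq_one
  refine le_antisymm ?_ (w.map_sub_one_le_map_pow_sub_one
    (w.map_nonneg_of_pow_eq_one (NeZero.ne m) hζ.pow_eq_one) i)
  conv_rhs => rw [← hj]
  exact w.map_sub_one_le_map_pow_sub_one
    (w.map_nonneg_of_pow_eq_one (NeZero.ne m) hη.pow_eq_one) j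

theorem totient_nsmul_map_sub_one {p n : ℕ} [Fact p.Prime] (hn : n ≠ 0) {ζ : R}
    (hζ : IsPrimitiveRoot ζ (p ^ n)) : (p ^ n).totient • w (ζ - 1) = w (p : R) := by
  have : NeZero (p ^ n) := ⟨pow_ne_zero n (Fact.out : p.Prime).ne_zero⟩
  have hprod : ∏ η ∈ primitiveRoots (p ^ n) R, (1 - η) = (p : R) := by
    obtain ⟨k, rfl⟩ := Nat.exists_eq_succ_of_ne_zero hn
    rw [← Polynomial.eval_one_cyclotomic_prime_pow (R := R) k,
      Polynomial.cyclotomic_eq_prod_X_sub_primitiveRoots hζ, Polynomial.eval_prod]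
    simp
  rw [← hprod, map_prod, ← hζ.card_primitiveRoots, ← Finset.sum_const]
  refine Finset.sum_congr rfl fun η hη => ?_
  rw [w.map_sub_swap 1 η]
  exact (w.map_sub_one_eq_of_isPrimitiveRoot hζ
    ((mem_primitiveRoots (Nat.pos_of_neZero _)).mp hη)).symm

end AddValuation

theorem PowerSeries.map_X_add_one_pow_sub_one_ne_zero {A : Type*} [CommRing A] [IsLocalRing A]
    {m : ℕ} (hm : m ≠ 0) : ((X + 1 : A⟦X⟧) ^ m - 1).map (IsLocalRing.residue A) ≠ 0 := by
  intro h
  have := congrArg (coeff m) h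
  have hcoe : ((X + 1 : (IsLocalRing.ResidueField A)⟦X⟧) ^ m - 1)
      = (((Polynomial.X + 1) ^ m - 1 : Polynomial (IsLocalRing.ResidueField A)) : _) := by
    simp
  rw [map_sub, map_pow, map_add, map_X, map_one, hcoe, Polynomial.coeff_coe] at this
  simp [Polynomial.coeff_one, Polynomial.coeff_X_add_one_pow, hm] at this

namespace PadicInt
variable {p : ℕ} [Fact p.Prime]

theorem exists_eq_X_pow_mul_add_C_mul {g : ℤ_[p]⟦X⟧} {lam : ℕ}
    (hlam : (g.map toZMod).order = lam) :
    ∃ U G : ℤ_[p]⟦X⟧, IsUnit U ∧ g = X ^ lam * U + C (p : ℤ_[p]) * G := by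
  obtain ⟨hlam_ne, hlt⟩ := order_eq_nat.mp hlam
  have hdvd_iff : ∀ a : ℤ_[p], toZMod a = 0 ↔ (p : ℤ_[p]) ∣ a := fun a => by
    rw [← RingHom.mem_ker, ker_toZMod, maximalIdeal_eq_span_p, Ideal.mem_span_singleton]
  obtain ⟨G, hG⟩ : Polynomial.C (p : ℤ_[p]) ∣ trunc lam g := by
    refine (Polynomial.C_dvd_iff_dvd_coeff _ _).2 fun i => ?_
    rw [coeff_trunc]
    split_ifs with hi
    · rw [← hdvd_iff, ← coeff_map]
      exact hlt i hi
    · exact dvd_zero _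
  refine ⟨mk fun i => coeff (i + lam) g, G, ?_, ?_⟩
  · rw [isUnit_iff_constantCoeff, ← coeff_zero_eq_constantCoeff_apply, coeff_mk, zero_add,
      ← IsLocalRing.notMem_maximalIdeal, ← ker_toZMod, RingHom.mem_ker, ← coeff_map]
    exact hlam_ne
  · conv_lhs => rw [eq_X_pow_mul_shift_add_trunc lam g, hG]
    rw [Polynomial.coe_mul, Polynomial.coe_C]

theorem map_eq_nsmul_of_order_map_toZMod {K Γ₀ : Type*} [CommRing K]
    [LinearOrderedAddCommMonoidWithTop Γ₀] (w : AddValuation K Γ₀) (ψ : ℤ_[p]⟦X⟧ →+* K)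
    (hψ : ∀ h, 0 ≤ w (ψ h)) {g : ℤ_[p]⟦X⟧} {lam : ℕ} (hlam : (g.map toZMod).order = lam)
    (hlt : lam • w (ψ X) < w (ψ (C (p : ℤ_[p])))) :
    w (ψ g) = lam • w (ψ X) := by
  obtain ⟨U, G, hU, rfl⟩ := exists_eq_X_pow_mul_add_C_mul hlam
  have hmain : w (ψ (X ^ lam * U)) = lam • w (ψ X) := by
    rw [map_mul, map_pow, w.map_mul, w.map_pow, w.map_eq_zero_of_isUnit ψ hψ hU, add_zero]
  rw [map_add, w.map_add_eq_of_lt_left, hmain]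
  rw [hmain, map_mul, w.map_mul]
  exact hlt.trans_le (le_add_of_nonneg_right (hψ G))

end PadicInt

theorem Nat.lt_totient_prime_pow {p n k : ℕ} (hp : p.Prime) (hk : k < n) :
    k < (p ^ n).totient := by
  rw [Nat.totient_prime_pow hp (by omega)]
  calc k < p ^ (n - 1) := lt_of_le_of_lt (by omega) (Nat.lt_pow_self hp.one_lt)
    _ ≤ p ^ (n - 1) * (p - 1) := Nat.le_mul_of_pos_right _ (Nat.sub_pos_of_lt hp.one_lt)

section PadicAlgebra
variable {p : ℕ} [Fact p.Prime] {K : Type*} [Field K] [Algebra ℚ_[p] K]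
  {w : AddValuation K (WithTop ℚ)} {ψ : ℤ_[p]⟦X⟧ →+* K}

theorem nonneg_map_C_of_extends_padicValuation
    (hw : ∀ x : ℚ_[p], x ≠ 0 → w (algebraMap ℚ_[p] K x) = (x.valuation : ℚ))
    (hψC : ∀ a : ℤ_[p], ψ (C a) = algebraMap ℚ_[p] K a) (a : ℤ_[p]) : 0 ≤ w (ψ (C a)) := by
  rcases eq_or_ne a 0 with rfl | ha
  · simp
  rw [hψC, hw _ (PadicInt.coe_ne_zero.2 ha)]
  exact_mod_cast Nat.zero_le _

theorem map_C_p_of_extends_padicValuation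
    (hw : ∀ x : ℚ_[p], x ≠ 0 → w (algebraMap ℚ_[p] K x) = (x.valuation : ℚ))
    (hψC : ∀ a : ℤ_[p], ψ (C a) = algebraMap ℚ_[p] K a) : w (ψ (C (p : ℤ_[p]))) = 1 := by
  rw [hψC, PadicInt.coe_natCast, hw _ (by exact_mod_cast (Fact.out : p.Prime).ne_zero),
    Padic.valuation_p]
  rfl

theorem nonneg_map_of_map_X_eq_sub_one
    (hw : ∀ x : ℚ_[p], x ≠ 0 → w (algebraMap ℚ_[p] K x) = (x.valuation : ℚ))
    (hψC : ∀ a : ℤ_[p], ψ (C a) = algebraMap ℚ_[p] K a) {ζ : K} {n : ℕ}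
    (hζ : IsPrimitiveRoot ζ (p ^ n)) (hψX : ψ X = ζ - 1) (h : ℤ_[p]⟦X⟧) : 0 ≤ w (ψ h) := by
  have hpn : p ^ n ≠ 0 := pow_ne_zero n (Fact.out : p.Prime).ne_zero
  have hX : 0 ≤ w (ψ X) := hψX ▸ w.map_le_sub (w.map_nonneg_of_pow_eq_one hpn hζ.pow_eq_one)
    w.map_one.ge
  have hψQ : ψ ((X + 1) ^ (p ^ n) - 1) = 0 := by
    rw [map_sub, map_pow, map_add, map_one, hψX, sub_add_cancel, hζ.pow_eq_one, sub_self]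
  exact w.nonneg_map_of_map_eq_zero ψ (nonneg_map_C_of_extends_padicValuation hw hψC) hX
    (map_X_add_one_pow_sub_one_ne_zero hpn) hψQ h

theorem map_X_of_map_X_eq_sub_one
    (hw : ∀ x : ℚ_[p], x ≠ 0 → w (algebraMap ℚ_[p] K x) = (x.valuation : ℚ))
    (hψC : ∀ a : ℤ_[p], ψ (C a) = algebraMap ℚ_[p] K a) {ζ : K} {n : ℕ} (hn : n ≠ 0)
    (hζ : IsPrimitiveRoot ζ (p ^ n)) (hψX : ψ X = ζ - 1) :
    w (ψ X) = ((1 / (p ^ n).totient : ℚ) : WithTop ℚ) := by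
  have htot : (p ^ n).totient • w (ψ X) = 1 := by
    rw [hψX, w.totient_nsmul_map_sub_one hn hζ, ← map_natCast (algebraMap ℚ_[p] K),
      ← PadicInt.coe_natCast, ← hψC, map_C_p_of_extends_padicValuation hw hψC]
  have hX : ψ X ≠ 0 :=
    hψX ▸ sub_ne_zero.2 (hζ.ne_one (Nat.one_lt_pow hn (Fact.out : p.Prime).one_lt))
  obtain ⟨e, he⟩ := WithTop.ne_top_iff_exists.1 (w.ne_top_iff.2 hX)
  rw [← he, ← WithTop.coe_nsmul, ← WithTop.coe_one, WithTop.coe_inj, nsmul_eq_mul] at htot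
  rw [← he, eq_one_div_of_mul_eq_one_right htot]

theorem map_C_p_pow_mul_of_order_map_toZMod
    (hw : ∀ x : ℚ_[p], x ≠ 0 → w (algebraMap ℚ_[p] K x) = (x.valuation : ℚ))
    (hψC : ∀ a : ℤ_[p], ψ (C a) = algebraMap ℚ_[p] K a) {ζ : K} {n : ℕ} (hn : n ≠ 0)
    (hζ : IsPrimitiveRoot ζ (p ^ n)) (hψX : ψ X = ζ - 1) {g : ℤ_[p]⟦X⟧} {lam : ℕ}
    (hlam : (g.map PadicInt.toZMod).order = lam) (hlt : lam < (p ^ n).totient) (μ : ℕ) :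
    w (ψ (C (p : ℤ_[p]) ^ μ * g)) = ((μ + lam / (p ^ n).totient : ℚ) : WithTop ℚ) := by
  have hp := map_C_p_of_extends_padicValuation hw hψC
  have hX := map_X_of_map_X_eq_sub_one hw hψC hn hζ hψX
  have hg := PadicInt.map_eq_nsmul_of_order_map_toZMod w ψ
    (nonneg_map_of_map_X_eq_sub_one hw hψC hζ hψX) hlam (by
      rw [hp, hX, ← WithTop.coe_nsmul, ← WithTop.coe_one, WithTop.coe_lt_coe, nsmul_eq_mul,
        mul_one_div, div_lt_one (Nat.cast_pos.2 (Nat.zero_lt_of_lt hlt))]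
      exact_mod_cast hlt)
  rw [map_mul, map_pow, w.map_mul, w.map_pow, hp, hg, hX, ← WithTop.coe_one, ← WithTop.coe_nsmul,
    ← WithTop.coe_nsmul, ← WithTop.coe_add, nsmul_eq_mul, nsmul_eq_mul, mul_one, mul_one_div]

end PadicAlgebra

theorem ord_eval_at_eps_eventually_general {p : ℕ} [Fact p.Prime]
    -- a field containing all `ℚ_p(ζ_{p^n})`
    {K : Type*} [Field K] [Algebra ℚ_[p] K]
    (ζ : ℕ → K) (hζ : ∀ n, 1 ≤ n → IsPrimitiveRoot (ζ n) (p ^ n))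
    -- the (unique) valuation on `K` extending the `p`-adic valuation of `ℚ_p`
    (v : K → ℚ)
    (hv_mul : ∀ x y : K, x ≠ 0 → y ≠ 0 → v (x * y) = v x + v y)
    (hv_add : ∀ x y : K, x ≠ 0 → y ≠ 0 → x + y ≠ 0 → min (v x) (v y) ≤ v (x + y))
    (hv_ext : ∀ x : ℚ_[p], x ≠ 0 → v (algebraMap ℚ_[p] K x) = (x.valuation : ℚ))
    -- evaluation of power series at `ε_n = ζ_{p^n} − 1`
    (φ : ℕ → (PowerSeries ℤ_[p] →+* K))
    (hφC : ∀ n, 1 ≤ n → ∀ a : ℤ_[p],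
      φ n (PowerSeries.C a) = algebraMap ℚ_[p] K (a : ℚ_[p]))
    (hφX : ∀ n, 1 ≤ n → φ n PowerSeries.X = ζ n - 1)
    -- `f = p^μ·g` with `p ∤ g`, and `λ` the `X`-adic order of `g` mod `p`
    (f g : PowerSeries ℤ_[p]) (μ lam : ℕ)
    (hfg : f = (PowerSeries.C (p : ℤ_[p])) ^ μ * g)
    (hlam : (PowerSeries.map (PadicInt.toZMod) g).order = (lam : ℕ∞)) :
    ∃ N : ℕ, ∀ n, N ≤ n → φ n f ≠ 0 ∧
      ((p - 1) * p ^ (n - 1) : ℚ) * v (φ n f)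
        = ((p - 1) * p ^ (n - 1) : ℚ) * μ + lam := by
  refine ⟨lam + 1, fun n hn => ?_⟩
  have hn1 : 1 ≤ n := by omega
  set w := addValuationOfNeZero v hv_mul hv_add
  have hw : ∀ x : ℚ_[p], x ≠ 0 → w (algebraMap ℚ_[p] K x) = (x.valuation : ℚ) := fun x hx =>
    (addValuationOfNeZero_eq_coe_iff v hv_mul hv_add).2 ⟨(map_ne_zero _).2 hx, hv_ext x hx⟩
  have hwf := map_C_p_pow_mul_of_order_map_toZMod hw (hφC n hn1) (by omega) (hζ n hn1)
    (hφX n hn1) hlam (Nat.lt_totient_prime_pow Fact.out (by omega)) μ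
  obtain ⟨hne, hv⟩ := (addValuationOfNeZero_eq_coe_iff v hv_mul hv_add).1 (hfg ▸ hwf)
  refine ⟨hne, ?_⟩
  have ht : ((p - 1) * p ^ (n - 1) : ℚ) = (p ^ n).totient := by
    rw [Nat.totient_prime_pow Fact.out (by omega)]
    push_cast [Nat.cast_sub (Fact.out : p.Prime).one_le]
    ring
  have ht0 : ((p ^ n).totient : ℚ) ≠ 0 := by
    exact_mod_cast (Nat.totient_pos.2 (pow_pos (Fact.out : p.Prime).pos n)).ne'
  rw [hv, ht]
  field_simp

/-- For a nonzero `f = p^μ·g ∈ ℤ_p[[X]]` with `p ∤ g` and `λ` the `X`-adic order of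
`g mod p`, one has `ord_{ε_n}(f(ε_n)) = (p−1)p^{n−1}·μ + λ` for all `n ≫ 0`. -/
theorem ord_eval_at_eps_eventually {p : ℕ} [Fact p.Prime] (hp : Odd p)
    -- a field containing all `ℚ_p(ζ_{p^n})`
    {K : Type*} [Field K] [Algebra ℚ_[p] K]
    (ζ : ℕ → K) (hζ : ∀ n, 1 ≤ n → IsPrimitiveRoot (ζ n) (p ^ n))
    -- the (unique) valuation on `K` extending the `p`-adic valuation of `ℚ_p`
    (v : K → ℚ)
    (hv_mul : ∀ x y : K, x ≠ 0 → y ≠ 0 → v (x * y) = v x + v y)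
    (hv_add : ∀ x y : K, x ≠ 0 → y ≠ 0 → x + y ≠ 0 → min (v x) (v y) ≤ v (x + y))
    (hv_ext : ∀ x : ℚ_[p], x ≠ 0 → v (algebraMap ℚ_[p] K x) = (x.valuation : ℚ))
    -- evaluation of power series at `ε_n = ζ_{p^n} − 1`
    (φ : ℕ → (PowerSeries ℤ_[p] →+* K))
    (hφC : ∀ n, 1 ≤ n → ∀ a : ℤ_[p],
      φ n (PowerSeries.C a) = algebraMap ℚ_[p] K (a : ℚ_[p]))
    (hφX : ∀ n, 1 ≤ n → φ n PowerSeries.X = ζ n - 1)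
    -- `f = p^μ·g` with `p ∤ g`, and `λ` the `X`-adic order of `g` mod `p`
    (f g : PowerSeries ℤ_[p]) (hf0 : f ≠ 0) (μ lam : ℕ)
    (hfg : f = (PowerSeries.C (p : ℤ_[p])) ^ μ * g)
    (hpg : ¬ (PowerSeries.C (p : ℤ_[p])) ∣ g)
    (hlam : (PowerSeries.map (PadicInt.toZMod) g).order = (lam : ℕ∞)) :
    ∃ N : ℕ, ∀ n, N ≤ n → φ n f ≠ 0 ∧
      ((p - 1) * p ^ (n - 1) : ℚ) * v (φ n f)
        = ((p - 1) * p ^ (n - 1) : ℚ) * μ + lam :=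
  ord_eval_at_eps_eventually_general ζ hζ v hv_mul hv_add hv_ext φ hφC hφX f g μ lam hfg hlam
end

section
/- Let p be an odd prime, a ∈ p·ℤ_p, u ∈ ℤ_p^× and n ≥ 1. With C_i := [[a, 1], [−Φ_i, 0]] ∈ M_2(ℤ_p[X]) and H_n := C_n·C_{n−1}···C_1, write (H_n^♯, H_n^♭) for the first row of H_n. Then for every F ∈ Λ = ℤ_p[[X]] there exist G₁, G₂ ∈ Λ whose constant terms satisfy (p−1)·G₁(0) = (2−a)·G₂(0), such that H_n^♯·G₁ + u·H_n^♭·G₂ ≡ ω_{n−1}·F (mod ω_n·Λ). In other words, writing I := {(G₁,G₂) ∈ Λ⊕Λ : (p−1)G₁(0) = (2−a)G₂(0)} and h : I → Λ/(ω_n), (G₁,G₂) ↦ H_n^♯G₁ + uH_n^♭G₂ mod ω_n, the image of h contains ω_{n−1}·(Λ/(ω_n)). -/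
/-- `ω_m = (1+X)^{p^m} − 1` in `Λ = ℤ_p[[X]]`. -/
noncomputable def omegaPS (p : ℕ) [Fact p.Prime] (m : ℕ) : PowerSeries ℤ_[p] :=
  (1 + PowerSeries.X) ^ (p ^ m) - 1

/-!
The first rows of `H_n` and `H_{n-1}` form a Wronskian: since each `C_i` has determinant `Φ_i`,
`det H_{n-1} = Φ_1 ⋯ Φ_{n-1} = ω_{n-1}/X`, and expanding `H_n = C_n H_{n-1}` gives
`H_n^♯ H_{n-1}^♭ - H_n^♭ H_{n-1}^♯ = -det H_{n-1}`. Hence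
`G₁ = -X H_{n-1}^♭ F` and `G₂ = u⁻¹ X H_{n-1}^♯ F` hit `ω_{n-1} F` exactly, and both have
constant term `0`.
-/

section TwoByTwoRecurrence

variable {R : Type*} [CommRing R] {a : R} {Φ : ℕ → R} {H : ℕ → Matrix (Fin 2) (Fin 2) R}

theorem det_succ_of_recurrence (hH : ∀ m, H (m + 1) = !![a, 1; -Φ (m + 1), 0] * H m) (m : ℕ) :
    (H (m + 1)).det = Φ (m + 1) * (H m).det := by
  rw [hH, Matrix.det_mul, Matrix.det_fin_two_of]
  ring

theorem mul_det_eq_of_recurrence (hH : ∀ m, H (m + 1) = !![a, 1; -Φ (m + 1), 0] * H m)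
    (hH0 : H 0 = 1) {ω : ℕ → R} (hω : ∀ m, ω m * Φ (m + 1) = ω (m + 1)) (k : ℕ) :
    ω 0 * (H k).det = ω k := by
  induction k with
  | zero => rw [hH0, Matrix.det_one, mul_one]
  | succ k ih => rw [det_succ_of_recurrence hH, ← hω, ← ih]; ring

theorem first_row_succ_of_recurrence (hH : ∀ m, H (m + 1) = !![a, 1; -Φ (m + 1), 0] * H m)
    (m : ℕ) (j : Fin 2) : H (m + 1) 0 j = a * H m 0 j + H m 1 j := by
  simp [hH, Matrix.mul_apply, Fin.sum_univ_two]

theorem first_row_wronskian_of_recurrence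
    (hH : ∀ m, H (m + 1) = !![a, 1; -Φ (m + 1), 0] * H m) (m : ℕ) :
    H (m + 1) 0 0 * H m 0 1 - H (m + 1) 0 1 * H m 0 0 = -(H m).det := by
  rw [first_row_succ_of_recurrence hH, first_row_succ_of_recurrence hH, Matrix.det_fin_two]
  ring

end TwoByTwoRecurrence

theorem omegaPS_zero (p : ℕ) [Fact p.Prime] : omegaPS p 0 = PowerSeries.X := by
  simp [omegaPS]

theorem image_h_contains_omega_general {p : ℕ} [Fact p.Prime]
    (a : ℤ_[p]) (u : ℤ_[p]ˣ) (n : ℕ) (hn : 1 ≤ n)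
    -- `Φ_m = ω_m/ω_{m−1}` for `m ≥ 1`
    (Phi : ℕ → PowerSeries ℤ_[p])
    (hPhi : ∀ m, 1 ≤ m → omegaPS p (m - 1) * Phi m = omegaPS p m)
    -- `C_i = [[a, 1], [−Φ_i, 0]]` and `H_0 = 1`, `H_m = C_m·H_{m−1}`
    (C : ℕ → Matrix (Fin 2) (Fin 2) (PowerSeries ℤ_[p]))
    (hC : ∀ i, C i = !![PowerSeries.C a, 1; -(Phi i), 0])
    (H : ℕ → Matrix (Fin 2) (Fin 2) (PowerSeries ℤ_[p]))
    (hH0 : H 0 = 1) (hH : ∀ m, H (m + 1) = C (m + 1) * H m) :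
    ∀ F : PowerSeries ℤ_[p], ∃ G₁ G₂ : PowerSeries ℤ_[p],
      ((p : ℤ_[p]) - 1) * PowerSeries.constantCoeff G₁
        = (2 - a) * PowerSeries.constantCoeff G₂ ∧
      omegaPS p n ∣ (H n 0 0 * G₁ + PowerSeries.C (u : ℤ_[p]) * (H n 0 1) * G₂
        - omegaPS p (n - 1) * F) := by
  intro F
  obtain ⟨m, rfl⟩ : ∃ m, n = m + 1 := ⟨n - 1, (Nat.succ_pred_eq_of_pos hn).symm⟩
  have hrec : ∀ k, H (k + 1) = !![PowerSeries.C a, 1; -Phi (k + 1), 0] * H k := by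
    intro k
    rw [hH, hC]
  have hdet : PowerSeries.X * (H m).det = omegaPS p m := by
    rw [← omegaPS_zero p]
    exact mul_det_eq_of_recurrence hrec hH0 (fun k => by simpa using hPhi (k + 1) le_add_self) m
  have hwronskian := first_row_wronskian_of_recurrence hrec m
  have hu : PowerSeries.C (u : ℤ_[p]) * PowerSeries.C ((u⁻¹ : ℤ_[p]ˣ) : ℤ_[p]) = 1 := by
    rw [← map_mul, Units.mul_inv, map_one]
  refine ⟨-(PowerSeries.X * H m 0 1 * F),
    PowerSeries.C ((u⁻¹ : ℤ_[p]ˣ) : ℤ_[p]) * (PowerSeries.X * H m 0 0 * F), by simp, ?_⟩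
  rw [Nat.add_sub_cancel]
  convert dvd_zero (omegaPS p (m + 1)) using 1
  linear_combination -(PowerSeries.X * F) * hwronskian + F * hdet
    + (H (m + 1) 0 1 * (PowerSeries.X * H m 0 0 * F)) * hu

/-- The image of `h : I → Λ/(ω_n)`, `(G₁,G₂) ↦ H_n^♯G₁ + uH_n^♭G₂`, contains
`ω_{n−1}·(Λ/(ω_n))`. -/
theorem image_h_contains_omega {p : ℕ} [Fact p.Prime] (hp : Odd p)
    (a : ℤ_[p]) (ha : (p : ℤ_[p]) ∣ a) (u : ℤ_[p]ˣ) (n : ℕ) (hn : 1 ≤ n)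
    -- `Φ_m = ω_m/ω_{m−1}` for `m ≥ 1`
    (Phi : ℕ → PowerSeries ℤ_[p])
    (hPhi : ∀ m, 1 ≤ m → omegaPS p (m - 1) * Phi m = omegaPS p m)
    -- `C_i = [[a, 1], [−Φ_i, 0]]` and `H_0 = 1`, `H_m = C_m·H_{m−1}`
    (C : ℕ → Matrix (Fin 2) (Fin 2) (PowerSeries ℤ_[p]))
    (hC : ∀ i, C i = !![PowerSeries.C a, 1; -(Phi i), 0])
    (H : ℕ → Matrix (Fin 2) (Fin 2) (PowerSeries ℤ_[p]))
    (hH0 : H 0 = 1) (hH : ∀ m, H (m + 1) = C (m + 1) * H m) :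
    ∀ F : PowerSeries ℤ_[p], ∃ G₁ G₂ : PowerSeries ℤ_[p],
      ((p : ℤ_[p]) - 1) * PowerSeries.constantCoeff G₁
        = (2 - a) * PowerSeries.constantCoeff G₂ ∧
      omegaPS p n ∣ (H n 0 0 * G₁ + PowerSeries.C (u : ℤ_[p]) * (H n 0 1) * G₂
        - omegaPS p (n - 1) * F) :=
  image_h_contains_omega_general a u n hn Phi hPhi C hC H hH0 hH
end

section
/- Let p be an odd prime and n ≥ 1. With a = 0, C_i := [[0, 1], [−Φ_i, 0]] ∈ M_2(ℤ_p[X]) and H_n := C_n·C_{n−1}···C_1, write (H_n^♯, H_n^♭) for the first row of H_n, and evaluate all entries at ε_n = ζ_{p^n} − 1. Then both entries of the second row of H_n(ε_n) are zero, and: if n is odd, H_n^♯(ε_n) = 0 and v_p(H_n^♭(ε_n)) = Σ_{i=1}^{(n−1)/2} p^{−(2i−1)}; if n is even, v_p(H_n^♯(ε_n)) = Σ_{i=1}^{n/2} p^{−(2i−1)} and H_n^♭(ε_n) = 0. -/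
/-!
A primitive `p ^ (k + 1)`-th root of unity `ξ` has `v (ξ - 1) = 1 / φ(p ^ (k + 1))`: the value of
the `p ^ (k + 1)`-th cyclotomic polynomial at `1` is `p = ∏ (1 - μ)` over the primitive roots `μ`,
and all these factors have the same valuation because `μ - 1` and `ξ - 1` divide each other up to
sums of roots of unity. As `ω_m(ε_n) = ζ ^ p ^ m - 1` with `ζ ^ p ^ m` a primitive
`p ^ (n - m)`-th root of unity, `Φ_n(ε_n) = 0` and `v (Φ_m(ε_n)) = p ^ (m - n)` for `1 ≤ m < n`.
A product of matrices `[[0, 1], [-c_i, 0]]` is diagonal or antidiagonal according to parity, its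
entries being signed products of the `c_i` of one parity; the vanishing factor `Φ_n(ε_n)` lands in
the second row.
-/

/-- `ω_m = (1+X)^{p^m} − 1` in `ℤ_p[X]`. -/
noncomputable def omegaPoly (p : ℕ) [Fact p.Prime] (m : ℕ) : Polynomial ℤ_[p] :=
  (1 + Polynomial.X) ^ (p ^ m) - 1

theorem eval₂_omegaPoly {p : ℕ} [Fact p.Prime] {R : Type*} [CommRing R] (f : ℤ_[p] →+* R)
    (x : R) (m : ℕ) : (omegaPoly p m).eval₂ f (x - 1) = x ^ p ^ m - 1 := by
  simp [omegaPoly, Polynomial.eval₂_pow]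

open Finset

theorem sum_range_sub_eq_sum_Icc {M : Type*} [AddCommMonoid M] (f : ℕ → M) (k : ℕ) :
    ∑ j ∈ range k, f (k - j) = ∑ i ∈ Icc 1 k, f i := by
  induction k with
  | zero => simp
  | succ k ih => rw [sum_range_succ', sum_Icc_succ_top (by omega), ← ih]; simp [add_comm]

section CompanionProduct

variable {R : Type*} [CommRing R] {q : ℕ → R} {H : ℕ → Matrix (Fin 2) (Fin 2) R}
  (hsucc : ∀ m, H (m + 1) = !![0, 1; -q (m + 1), 0] * H m)

include hsucc

theorem companion_prod_even (h0 : H 0 = 1) (k : ℕ) :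
    H (2 * k) = !![∏ j ∈ range k, -q (2 * j + 1), 0; 0, ∏ j ∈ range k, -q (2 * j + 2)] := by
  induction k with
  | zero => simp [h0, Matrix.one_fin_two]
  | succ k ih =>
    rw [show 2 * (k + 1) = 2 * k + 1 + 1 by ring, hsucc, hsucc, ih]
    simp [prod_range_succ, mul_comm]

theorem companion_prod_odd (h0 : H 0 = 1) (k : ℕ) :
    H (2 * k + 1) = !![0, ∏ j ∈ range k, -q (2 * j + 2);
      -q (2 * k + 1) * ∏ j ∈ range k, -q (2 * j + 1), 0] := by
  rw [hsucc, companion_prod_even hsucc h0]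
  simp

end CompanionProduct

section PrimitiveRoots

variable {K : Type*} [Field K] {p : ℕ} [hp : Fact p.Prime]

theorem isPrimitiveRoot_pow_prime_pow {ζ : K} {n m : ℕ} (hζ : IsPrimitiveRoot ζ (p ^ n))
    (hmn : m ≤ n) : IsPrimitiveRoot (ζ ^ p ^ m) (p ^ (n - m)) :=
  hζ.pow (pow_pos hp.out.pos n) (by rw [← pow_add, Nat.add_sub_cancel' hmn])

theorem eq_zero_of_mul_pow_sub_one_eq {ζ x : K} {m : ℕ} (hζ : IsPrimitiveRoot ζ (p ^ (m + 1)))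
    (hx : (ζ ^ p ^ m - 1) * x = ζ ^ p ^ (m + 1) - 1) : x = 0 := by
  have hroot := isPrimitiveRoot_pow_prime_pow hζ (Nat.le_succ m)
  rw [Nat.add_sub_cancel_left, pow_one] at hroot
  rw [hζ.pow_eq_one, sub_self] at hx
  exact (mul_eq_zero.1 hx).resolve_left (hroot.sub_one_ne_zero hp.out.one_lt)

end PrimitiveRoots

section Valuation

variable {K : Type*} [Field K] {v : K → ℚ}
  (hv_mul : ∀ x y : K, x ≠ 0 → y ≠ 0 → v (x * y) = v x + v y)
  (hv_add : ∀ x y : K, x ≠ 0 → y ≠ 0 → x + y ≠ 0 → min (v x) (v y) ≤ v (x + y))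

section Multiplicative

include hv_mul

theorem val_one : v 1 = 0 := by
  simpa using hv_mul 1 1 one_ne_zero one_ne_zero

theorem val_neg {x : K} (hx : x ≠ 0) : v (-x) = v x := by
  have h : v (-1) = 0 := by
    have := hv_mul (-1) (-1) (by norm_num) (by norm_num)
    rw [neg_one_mul, neg_neg, val_one hv_mul] at this
    linarith
  rw [← neg_one_mul, hv_mul _ _ (by norm_num) hx, h, zero_add]

theorem val_prod {ι : Type*} (s : Finset ι) (x : ι → K) (hx : ∀ i ∈ s, x i ≠ 0) :
    v (∏ i ∈ s, x i) = ∑ i ∈ s, v (x i) := by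
  classical
  induction s using Finset.induction_on with
  | empty => simpa using val_one hv_mul
  | insert a s ha ih =>
    have hs : ∀ i ∈ s, x i ≠ 0 := fun i hi => hx i (mem_insert_of_mem hi)
    rw [prod_insert ha, sum_insert ha,
      hv_mul _ _ (hx a (mem_insert_self a s)) (prod_ne_zero_iff.2 hs), ih hs]

theorem val_pow {x : K} (hx : x ≠ 0) (m : ℕ) : v (x ^ m) = m * v x := by
  simpa using val_prod hv_mul (range m) (fun _ => x) (fun _ _ => hx)

theorem val_eq_zero_of_pow_eq_one {x : K} {N : ℕ} (hN : 0 < N) (hx : x ^ N = 1) : v x = 0 := by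
  have hx0 : x ≠ 0 := by rintro rfl; simp [hN.ne'] at hx
  have h := val_pow hv_mul hx0 N
  rw [hx, val_one hv_mul] at h
  exact (mul_eq_zero.1 h.symm).resolve_left (by positivity)

theorem val_prod_range_neg {k : ℕ} {x : ℕ → K} {f : ℕ → ℚ}
    (hx : ∀ j < k, x j ≠ 0 ∧ v (x j) = f (k - j)) :
    v (∏ j ∈ range k, -x j) = ∑ i ∈ Icc 1 k, f i := by
  rw [val_prod hv_mul _ _ fun j hj => neg_ne_zero.2 (hx j (mem_range.1 hj)).1,
    ← sum_range_sub_eq_sum_Icc]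
  refine sum_congr rfl fun j hj => ?_
  obtain ⟨hxj, hvj⟩ := hx j (mem_range.1 hj)
  rw [val_neg hv_mul hxj, hvj]

end Multiplicative

include hv_add in
theorem le_val_sum {ι : Type*} {s : Finset ι} {x : ι → K} {c : ℚ}
    (hx : ∀ i ∈ s, x i ≠ 0 ∧ c ≤ v (x i)) (hs : ∑ i ∈ s, x i ≠ 0) :
    c ≤ v (∑ i ∈ s, x i) := by
  classical
  induction s using Finset.induction_on with
  | empty => simp at hs
  | insert a s ha ih =>
    rw [sum_insert ha] at hs ⊢
    obtain ⟨hxa, hca⟩ := hx a (mem_insert_self a s)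
    by_cases hs0 : ∑ i ∈ s, x i = 0
    · rwa [hs0, add_zero]
    · have hcs := ih (fun i hi => hx i (mem_insert_of_mem hi)) hs0
      exact (le_min hca hcs).trans (hv_add _ _ hxa hs0 hs)

variable {p : ℕ} [Fact p.Prime] [Algebra ℚ_[p] K]
  (hv_ext : ∀ x : ℚ_[p], x ≠ 0 → v (algebraMap ℚ_[p] K x) = (x.valuation : ℚ))

include hv_ext in
theorem val_natCast_prime : v (p : K) = 1 := by
  rw [← map_natCast (algebraMap ℚ_[p] K),
    hv_ext _ (Nat.cast_ne_zero.2 (Fact.out : p.Prime).ne_zero), Padic.valuation_natCast,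
    padicValNat_self, Nat.cast_one, Int.cast_one]

include hv_mul hv_add

/-- `(ξ ^ j - 1) / (ξ - 1)` is a sum of roots of unity, hence has nonnegative valuation. -/
theorem val_sub_one_le_val_pow_sub_one {ξ : K} {N : ℕ} (hN : 0 < N) (hξ : ξ ^ N = 1) {j : ℕ}
    (hj : ξ ^ j ≠ 1) : v (ξ - 1) ≤ v (ξ ^ j - 1) := by
  have hfac : ξ ^ j - 1 = (ξ - 1) * ∑ i ∈ range j, ξ ^ i := by rw [mul_comm, geom_sum_mul]
  have hne : (ξ - 1) * ∑ i ∈ range j, ξ ^ i ≠ 0 := hfac ▸ sub_ne_zero.2 hj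
  have hξ0 : ξ ≠ 0 := by rintro rfl; simp [hN.ne'] at hξ
  have hroots : ∀ i ∈ range j, ξ ^ i ≠ 0 ∧ 0 ≤ v (ξ ^ i) := fun i _ =>
    ⟨pow_ne_zero i hξ0, (val_eq_zero_of_pow_eq_one hv_mul hN (by
      rw [← pow_mul, mul_comm, pow_mul, hξ, one_pow])).ge⟩
  have hsum := le_val_sum hv_add hroots (right_ne_zero_of_mul hne)
  rw [hfac, hv_mul _ _ (left_ne_zero_of_mul hne) (right_ne_zero_of_mul hne)]
  linarith

theorem val_sub_one_eq_of_isPrimitiveRoot {ξ μ : K} {N : ℕ} (hN : 1 < N)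
    (hξ : IsPrimitiveRoot ξ N) (hμ : IsPrimitiveRoot μ N) : v (μ - 1) = v (ξ - 1) := by
  have : NeZero N := ⟨by omega⟩
  obtain ⟨i, -, hi⟩ := hξ.eq_pow_of_pow_eq_one hμ.pow_eq_one
  obtain ⟨j, -, hj⟩ := hμ.eq_pow_of_pow_eq_one hξ.pow_eq_one
  apply le_antisymm
  · rw [← hj]
    exact val_sub_one_le_val_pow_sub_one hv_mul hv_add (by omega) hμ.pow_eq_one
      (hj ▸ hξ.ne_one hN)
  · rw [← hi]
    exact val_sub_one_le_val_pow_sub_one hv_mul hv_add (by omega) hξ.pow_eq_one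
      (hi ▸ hμ.ne_one hN)

include hv_ext

theorem val_isPrimitiveRoot_sub_one {k : ℕ} {ξ : K} (hξ : IsPrimitiveRoot ξ (p ^ (k + 1))) :
    v (ξ - 1) = (((p : ℚ) - 1) * (p : ℚ) ^ k)⁻¹ := by
  have hp : p.Prime := Fact.out
  have hN : 1 < p ^ (k + 1) := Nat.one_lt_pow (by omega) hp.one_lt
  have hprod : (p : K) = ∏ μ ∈ primitiveRoots (p ^ (k + 1)) K, (1 - μ) := by
    rw [← Polynomial.eval_one_cyclotomic_prime_pow k,
      Polynomial.cyclotomic_eq_prod_X_sub_primitiveRoots hξ, Polynomial.eval_prod]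
    simp
  have hfactor : ∀ μ ∈ primitiveRoots (p ^ (k + 1)) K, 1 - μ ≠ 0 ∧ v (1 - μ) = v (ξ - 1) := by
    intro μ hμ
    rw [mem_primitiveRoots (by omega)] at hμ
    rw [← neg_sub, val_neg hv_mul (hμ.sub_one_ne_zero hN),
      val_sub_one_eq_of_isPrimitiveRoot hv_mul hv_add hN hξ hμ]
    exact ⟨neg_ne_zero.2 (hμ.sub_one_ne_zero hN), rfl⟩
  have h := val_natCast_prime hv_ext (K := K)
  rw [hprod, val_prod hv_mul _ _ fun μ hμ => (hfactor μ hμ).1,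
    sum_congr rfl fun μ hμ => (hfactor μ hμ).2, sum_const, hξ.card_primitiveRoots,
    Nat.totient_prime_pow_succ hp, nsmul_eq_mul, Nat.cast_mul, Nat.cast_pow,
    Nat.cast_sub hp.one_le, Nat.cast_one] at h
  rw [mul_comm ((p : ℚ) - 1)]
  exact eq_inv_of_mul_eq_one_right h

theorem val_of_mul_pow_sub_one_eq {ζ x : K} {n m : ℕ} (hζ : IsPrimitiveRoot ζ (p ^ n))
    (hmn : m + 1 < n) (hx : (ζ ^ p ^ m - 1) * x = ζ ^ p ^ (m + 1) - 1) :
    x ≠ 0 ∧ v x = ((p : ℚ) ^ (n - (m + 1)))⁻¹ := by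
  have hp : p.Prime := Fact.out
  obtain ⟨e, rfl⟩ : ∃ e, n = m + e + 2 := ⟨n - m - 2, by omega⟩
  have ha := isPrimitiveRoot_pow_prime_pow hζ (m := m) (by omega)
  have hb := isPrimitiveRoot_pow_prime_pow hζ (m := m + 1) (by omega)
  rw [show m + e + 2 - m = e + 1 + 1 by omega] at ha
  rw [show m + e + 2 - (m + 1) = e + 1 by omega] at hb ⊢
  have ha0 := ha.sub_one_ne_zero (Nat.one_lt_pow (by omega) hp.one_lt)
  have hb0 := hb.sub_one_ne_zero (Nat.one_lt_pow (by omega) hp.one_lt)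
  have hx0 : x ≠ 0 := by rintro rfl; rw [mul_zero] at hx; exact hb0 hx.symm
  refine ⟨hx0, ?_⟩
  have h := congrArg v hx
  rw [hv_mul _ _ ha0 hx0, val_isPrimitiveRoot_sub_one hv_mul hv_add hv_ext ha,
    val_isPrimitiveRoot_sub_one hv_mul hv_add hv_ext hb] at h
  have hp0 : (p : ℚ) ≠ 0 := by exact_mod_cast hp.ne_zero
  have hp1 : (p : ℚ) - 1 ≠ 0 := sub_ne_zero.2 (by exact_mod_cast hp.one_lt.ne')
  rw [eq_sub_of_add_eq' h]
  field_simp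
  ring

theorem val_prod_range_neg_of_mul_pow_sub_one_eq {ζ : K} {q : ℕ → K} {n k r : ℕ}
    (hζ : IsPrimitiveRoot ζ (p ^ n)) (hq : ∀ m, (ζ ^ p ^ m - 1) * q (m + 1) = ζ ^ p ^ (m + 1) - 1)
    (hn : n = 2 * k + r) :
    v (∏ j ∈ range k, -q (2 * j + r + 1)) = ∑ i ∈ Icc 1 k, ((p : ℚ) ^ (2 * i - 1))⁻¹ := by
  refine val_prod_range_neg (f := fun i => ((p : ℚ) ^ (2 * i - 1))⁻¹) hv_mul fun j hj => ?_
  obtain ⟨hne, hv⟩ := val_of_mul_pow_sub_one_eq hv_mul hv_add hv_ext hζ (by omega) (hq (2 * j + r))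
  exact ⟨hne, by rw [hv, show n - (2 * j + r + 1) = 2 * (k - j) - 1 by omega]⟩

end Valuation

theorem H_matrix_valuation_at_eps_a_eq_zero_general {p : ℕ} [Fact p.Prime]
    (n : ℕ) (hn : 1 ≤ n)
    -- a field containing `ℚ_p(ζ_{p^n})`
    {K : Type*} [Field K] [Algebra ℚ_[p] K]
    (ζ : K) (hζ : IsPrimitiveRoot ζ (p ^ n))
    -- the (unique) valuation on `K` extending the `p`-adic valuation of `ℚ_p`
    (v : K → ℚ)
    (hv_mul : ∀ x y : K, x ≠ 0 → y ≠ 0 → v (x * y) = v x + v y)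
    (hv_add : ∀ x y : K, x ≠ 0 → y ≠ 0 → x + y ≠ 0 → min (v x) (v y) ≤ v (x + y))
    (hv_ext : ∀ x : ℚ_[p], x ≠ 0 → v (algebraMap ℚ_[p] K x) = (x.valuation : ℚ))
    -- evaluation of polynomials at `ε_n = ζ − 1`
    (ev : Polynomial ℤ_[p] → K)
    (hev : ∀ q : Polynomial ℤ_[p],
      ev q = Polynomial.eval₂ ((algebraMap ℚ_[p] K).comp (PadicInt.Coe.ringHom)) (ζ - 1) q)
    -- `Φ_m = ω_m/ω_{m−1}` for `m ≥ 1`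
    (Phi : ℕ → Polynomial ℤ_[p])
    (hPhi : ∀ m, 1 ≤ m → omegaPoly p (m - 1) * Phi m = omegaPoly p m)
    -- `C_i = [[0, 1], [−Φ_i, 0]]` and `H_0 = 1`, `H_m = C_m·H_{m−1}`
    (C : ℕ → Matrix (Fin 2) (Fin 2) (Polynomial ℤ_[p]))
    (hC : ∀ i, C i = !![0, 1; -(Phi i), 0])
    (H : ℕ → Matrix (Fin 2) (Fin 2) (Polynomial ℤ_[p]))
    (hH0 : H 0 = 1) (hH : ∀ m, H (m + 1) = C (m + 1) * H m) :
    -- the second row of `H_n(ε_n)` vanishes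
    ev (H n 1 0) = 0 ∧ ev (H n 1 1) = 0 ∧
    -- odd case
    (n % 2 = 1 →
      ev (H n 0 0) = 0 ∧
      v (ev (H n 0 1)) = ∑ i ∈ Finset.Icc 1 ((n - 1) / 2), ((p : ℚ) ^ (2 * i - 1))⁻¹) ∧
    -- even case
    (n % 2 = 0 →
      v (ev (H n 0 0)) = ∑ i ∈ Finset.Icc 1 (n / 2), ((p : ℚ) ^ (2 * i - 1))⁻¹ ∧
      ev (H n 0 1) = 0) := by
  set E := Polynomial.eval₂RingHom ((algebraMap ℚ_[p] K).comp PadicInt.Coe.ringHom) (ζ - 1)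
  set q : ℕ → K := fun i => E (Phi i)
  have hentry : ∀ m i j, ev (H m i j) = (H m).map E i j := fun _ _ _ => hev _
  have h0 : (H 0).map E = 1 := by rw [hH0, Matrix.map_one _ (map_zero E) (map_one E)]
  have hsucc : ∀ m, (H (m + 1)).map E = !![0, 1; -q (m + 1), 0] * (H m).map E := by
    intro m
    rw [hH, Matrix.map_mul, hC]
    congr 1
    ext i j
    fin_cases i <;> fin_cases j <;> simp [q]
  have hrel : ∀ m, (ζ ^ p ^ m - 1) * q (m + 1) = ζ ^ p ^ (m + 1) - 1 := fun m => by
    simpa [q, E, eval₂_omegaPoly] using congrArg E (hPhi (m + 1) (by omega))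
  have hqn : q n = 0 := by
    obtain ⟨m, rfl⟩ : ∃ m, n = m + 1 := ⟨n - 1, by omega⟩
    exact eq_zero_of_mul_pow_sub_one_eq hζ (hrel m)
  obtain ⟨k, rfl | rfl⟩ := Nat.even_or_odd' n
  · simp only [hentry, companion_prod_even (H := fun m => (H m).map E) hsucc h0, Matrix.of_apply,
      Matrix.cons_val', Matrix.cons_val_zero, Matrix.cons_val_one, Matrix.empty_val',
      Matrix.cons_val_fin_one]
    refine ⟨trivial, prod_eq_zero (mem_range.2 (show k - 1 < k by omega)) ?_, by omega,
      fun _ => ⟨?_, trivial⟩⟩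
    · rw [show 2 * (k - 1) + 2 = 2 * k by omega, hqn, neg_zero]
    · rw [show 2 * k / 2 = k by omega]
      exact val_prod_range_neg_of_mul_pow_sub_one_eq hv_mul hv_add hv_ext hζ hrel (r := 0) rfl
  · simp only [hentry, companion_prod_odd (H := fun m => (H m).map E) hsucc h0, Matrix.of_apply,
      Matrix.cons_val', Matrix.cons_val_zero, Matrix.cons_val_one, Matrix.empty_val',
      Matrix.cons_val_fin_one]
    refine ⟨by rw [hqn, neg_zero, zero_mul], trivial, fun _ => ⟨trivial, ?_⟩, by omega⟩
    rw [show (2 * k + 1 - 1) / 2 = k by omega]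
    exact val_prod_range_neg_of_mul_pow_sub_one_eq hv_mul hv_add hv_ext hζ hrel rfl

/-- Valuations of the entries of `H_n(ε_n)` in the case `a = 0`. -/
theorem H_matrix_valuation_at_eps_a_eq_zero {p : ℕ} [Fact p.Prime] (hp : Odd p)
    (n : ℕ) (hn : 1 ≤ n)
    -- a field containing `ℚ_p(ζ_{p^n})`
    {K : Type*} [Field K] [Algebra ℚ_[p] K]
    (ζ : K) (hζ : IsPrimitiveRoot ζ (p ^ n))
    -- the (unique) valuation on `K` extending the `p`-adic valuation of `ℚ_p`
    (v : K → ℚ)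
    (hv_mul : ∀ x y : K, x ≠ 0 → y ≠ 0 → v (x * y) = v x + v y)
    (hv_add : ∀ x y : K, x ≠ 0 → y ≠ 0 → x + y ≠ 0 → min (v x) (v y) ≤ v (x + y))
    (hv_ext : ∀ x : ℚ_[p], x ≠ 0 → v (algebraMap ℚ_[p] K x) = (x.valuation : ℚ))
    -- evaluation of polynomials at `ε_n = ζ − 1`
    (ev : Polynomial ℤ_[p] → K)
    (hev : ∀ q : Polynomial ℤ_[p],
      ev q = Polynomial.eval₂ ((algebraMap ℚ_[p] K).comp (PadicInt.Coe.ringHom)) (ζ - 1) q)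
    -- `Φ_m = ω_m/ω_{m−1}` for `m ≥ 1`
    (Phi : ℕ → Polynomial ℤ_[p])
    (hPhi : ∀ m, 1 ≤ m → omegaPoly p (m - 1) * Phi m = omegaPoly p m)
    -- `C_i = [[0, 1], [−Φ_i, 0]]` and `H_0 = 1`, `H_m = C_m·H_{m−1}`
    (C : ℕ → Matrix (Fin 2) (Fin 2) (Polynomial ℤ_[p]))
    (hC : ∀ i, C i = !![0, 1; -(Phi i), 0])
    (H : ℕ → Matrix (Fin 2) (Fin 2) (Polynomial ℤ_[p]))
    (hH0 : H 0 = 1) (hH : ∀ m, H (m + 1) = C (m + 1) * H m) :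
    -- the second row of `H_n(ε_n)` vanishes
    ev (H n 1 0) = 0 ∧ ev (H n 1 1) = 0 ∧
    -- odd case
    (n % 2 = 1 →
      ev (H n 0 0) = 0 ∧
      v (ev (H n 0 1)) = ∑ i ∈ Finset.Icc 1 ((n - 1) / 2), ((p : ℚ) ^ (2 * i - 1))⁻¹) ∧
    -- even case
    (n % 2 = 0 →
      v (ev (H n 0 0)) = ∑ i ∈ Finset.Icc 1 (n / 2), ((p : ℚ) ^ (2 * i - 1))⁻¹ ∧
      ev (H n 0 1) = 0) :=
  H_matrix_valuation_at_eps_a_eq_zero_general n hn ζ hζ v hv_mul hv_add hv_ext ev hev Phi hPhi C hC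
    H hH0 hH
end
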